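/- Let A be a continuous T-periodic n×n matrix function, z₀ a T-periodic solution of the adjoint system ż = -A(t)ᵀz, and b : ℝ → ℝⁿ continuous and T-periodic. If the inhomogeneous equation ẏ = A(t)y + b(t) has a T-periodic solution, then ∫₀^T ⟨b(t), z₀(t)⟩ dt = 0. -/

import Mathlib

open Matrix intervalIntegral

/-!
Along a solution `y` of `ẏ = A y + b` and a solution `z` of the adjoint system `ż = -Aᵀ z`,
the `A`-terms cancel in `d/dt ⟨y, z⟩ = ⟨A y + b, z⟩ - ⟨y, Aᵀ z⟩`, so `⟨b, z⟩` is the derivative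
of `⟨y, z⟩`. Its integral over a period is therefore the increment of the `T`-periodic function
`⟨y, z⟩` over a period, which is zero.
-/

section

variable {𝕜 ι : Type*} [NontriviallyNormedField 𝕜] [Fintype ι]

theorem HasDerivAt.dotProduct {f g : 𝕜 → ι → 𝕜} {f' g' : ι → 𝕜} {t : 𝕜}
    (hf : HasDerivAt f f' t) (hg : HasDerivAt g g' t) :
    HasDerivAt (fun s => f s ⬝ᵥ g s) (f' ⬝ᵥ g t + f t ⬝ᵥ g') t := by
  simp only [_root_.dotProduct, ← Finset.sum_add_distrib]
  exact HasDerivAt.fun_sum fun i _ =>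
    (hasDerivAt_pi.mp hf i).mul (hasDerivAt_pi.mp hg i)

theorem mulVec_add_dotProduct_add_dotProduct_neg_transpose_mulVec {R : Type*} [CommRing R]
    (A : Matrix ι ι R) (y b z : ι → R) :
    (A *ᵥ y + b) ⬝ᵥ z + y ⬝ᵥ -(Aᵀ *ᵥ z) = b ⬝ᵥ z := by
  rw [add_dotProduct, dotProduct_neg, dotProduct_mulVec, vecMul_transpose]
  ring

theorem HasDerivAt.dotProduct_of_adjoint {y z : 𝕜 → ι → 𝕜} {A : Matrix ι ι 𝕜} {b : ι → 𝕜}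
    {t : 𝕜} (hy : HasDerivAt y (A *ᵥ y t + b) t) (hz : HasDerivAt z (-(Aᵀ *ᵥ z t)) t) :
    HasDerivAt (fun s => y s ⬝ᵥ z s) (b ⬝ᵥ z t) t := by
  simpa only [mulVec_add_dotProduct_add_dotProduct_neg_transpose_mulVec] using hy.dotProduct hz

end

theorem fredholm_alternative_necessity_general
    {n : ℕ} (T : ℝ)
    (A : ℝ → Matrix (Fin n) (Fin n) ℝ)
    (b : ℝ → Fin n → ℝ) (hb : Continuous b)
    (z₀ : ℝ → Fin n → ℝ)
    (hz₀ : ∀ t, HasDerivAt z₀ (-(A t)ᵀ.mulVec (z₀ t)) t)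
    (hz₀per : ∀ t, z₀ (t + T) = z₀ t)
    (hexists : ∃ y : ℝ → Fin n → ℝ,
      (∀ t, HasDerivAt y ((A t).mulVec (y t) + b t) t) ∧ (∀ t, y (t + T) = y t)) :
    (∫ t in (0:ℝ)..T, b t ⬝ᵥ z₀ t) = 0 := by
  obtain ⟨y, hy, hyper⟩ := hexists
  have hz₀cont : Continuous z₀ := continuous_iff_continuousAt.2 fun t => (hz₀ t).continuousAt
  have hint : IntervalIntegrable (fun t => b t ⬝ᵥ z₀ t) MeasureTheory.volume 0 T :=
    (hb.dotProduct hz₀cont).intervalIntegrable 0 T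
  rw [integral_eq_sub_of_hasDerivAt (fun t _ => (hy t).dotProduct_of_adjoint (hz₀ t)) hint,
    sub_eq_zero]
  simpa only [zero_add] using congrArg₂ dotProduct (hyper 0) (hz₀per 0)

/-- Fredholm alternative (necessity): if `ẏ = A(t)y + b(t)` has a `T`-periodic
solution and `z₀` is a `T`-periodic adjoint solution, then `∫₀ᵀ ⟨b(t), z₀(t)⟩ dt = 0`. -/
theorem fredholm_alternative_necessity
    {n : ℕ} (T : ℝ) (hT : 0 < T)
    (A : ℝ → Matrix (Fin n) (Fin n) ℝ)
    (hAcont : Continuous fun p : ℝ × (Fin n → ℝ) => (A p.1).mulVec p.2)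
    (hAper : ∀ t, A (t + T) = A t)
    (b : ℝ → Fin n → ℝ) (hb : Continuous b) (hbper : ∀ t, b (t + T) = b t)
    (z₀ : ℝ → Fin n → ℝ)
    (hz₀ : ∀ t, HasDerivAt z₀ (-(A t)ᵀ.mulVec (z₀ t)) t)
    (hz₀per : ∀ t, z₀ (t + T) = z₀ t)
    (hexists : ∃ y : ℝ → Fin n → ℝ,
      (∀ t, HasDerivAt y ((A t).mulVec (y t) + b t) t) ∧ (∀ t, y (t + T) = y t)) :
    (∫ t in (0:ℝ)..T, b t ⬝ᵥ z₀ t) = 0 :=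
  fredholm_alternative_necessity_general T A b hb z₀ hz₀ hz₀per hexists
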